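/- Let a : (0,1] → ℝ be C¹ with a > 0 on (0,1] satisfying x·|a'(x)| ≤ α·a(x) for some α ∈ [0,1), and let ψ ∈ H¹((0,1)) (complex-valued) with ψ(1) = 0. Then ∫_0^1 |ψ(τ)|² dτ ≤ (1 / (a(1)·(2−α))) · ∫_0^1 a(x)|ψ'(x)|² dx. -/

import Mathlib

open Real Set MeasureTheory intervalIntegral

/-!
Writing `ψ τ = -∫_τ^1 ψ'` and splitting `|ψ'| = a^{-1/2} · a^{1/2}|ψ'|`, Cauchy–Schwarz gives
`|ψ τ|² ≤ (∫_τ^1 1/a) · ∫_0^1 a|ψ'|²`. The hypothesis `x a' ≤ α a` makes `a(x) x^{-α}` antitone,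
so `a x ≥ a 1 · x^α` and `∫_τ^1 1/a ≤ (1 - τ^{1-α}) / ((1-α) a 1)`. Integrating in `τ`,
`∫_0^1 (1 - τ^{1-α}) dτ = (1-α)/(2-α)`.
-/

theorem sq_integral_sqrt_mul_le {X : Type*} [MeasurableSpace X] {μ : Measure X} {u v : X → ℝ}
    (hu0 : 0 ≤ᵐ[μ] u) (hv0 : 0 ≤ᵐ[μ] v) (hu : Integrable u μ) (hv : Integrable v μ) :
    (∫ x, √(u x * v x) ∂μ) ^ 2 ≤ (∫ x, u x ∂μ) * ∫ x, v x ∂μ := by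
  have hsqrt_memLp : ∀ {w : X → ℝ}, 0 ≤ᵐ[μ] w → Integrable w μ →
      MemLp (fun x => √(w x)) (ENNReal.ofReal 2) μ := fun {w} hw0 hw => by
    rw [ENNReal.ofReal_ofNat, memLp_two_iff_integrable_sq
      (continuous_sqrt.comp_aestronglyMeasurable hw.aestronglyMeasurable)]
    exact hw.congr (hw0.mono fun x hx => (sq_sqrt hx).symm)
  have hsqrt_rpow : ∀ {w : X → ℝ}, 0 ≤ᵐ[μ] w → ∫ x, √(w x) ^ (2 : ℝ) ∂μ = ∫ x, w x ∂μ :=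
    fun hw0 => integral_congr_ae (hw0.mono fun x hx => by simp only [rpow_ofNat, sq_sqrt hx])
  have holder := integral_mul_le_Lp_mul_Lq_of_nonneg HolderConjugate.two_two
    (ae_of_all _ fun x => sqrt_nonneg (u x)) (ae_of_all _ fun x => sqrt_nonneg (v x))
    (hsqrt_memLp hu0 hu) (hsqrt_memLp hv0 hv)
  rw [hsqrt_rpow hu0, hsqrt_rpow hv0, ← sqrt_eq_rpow, ← sqrt_eq_rpow,
    ← MeasureTheory.integral_congr_ae (hu0.mono fun x hx => sqrt_mul hx (v x))] at holder
  calc (∫ x, √(u x * v x) ∂μ) ^ 2 ≤ (√(∫ x, u x ∂μ) * √(∫ x, v x ∂μ)) ^ 2 :=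
        pow_le_pow_left₀ (integral_nonneg fun x => sqrt_nonneg _) holder 2
    _ = (∫ x, u x ∂μ) * ∫ x, v x ∂μ := by
        rw [mul_pow, sq_sqrt (integral_nonneg_of_ae hu0), sq_sqrt (integral_nonneg_of_ae hv0)]

theorem sq_norm_integral_le_integral_inv_mul {X E : Type*} [MeasurableSpace X]
    [NormedAddCommGroup E] [NormedSpace ℝ E] {μ : Measure X} {f : X → E} {w : X → ℝ}
    (hw : ∀ᵐ x ∂μ, 0 < w x) (hw_inv : Integrable (fun x => (w x)⁻¹) μ)
    (hwf : Integrable (fun x => w x * ‖f x‖ ^ 2) μ) :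
    ‖∫ x, f x ∂μ‖ ^ 2 ≤ (∫ x, (w x)⁻¹ ∂μ) * ∫ x, w x * ‖f x‖ ^ 2 ∂μ := by
  have hnorm : ∀ᵐ x ∂μ, ‖f x‖ = √((w x)⁻¹ * (w x * ‖f x‖ ^ 2)) := hw.mono fun x hx => by
    rw [inv_mul_cancel_left₀ hx.ne', sqrt_sq (norm_nonneg _)]
  calc ‖∫ x, f x ∂μ‖ ^ 2 ≤ (∫ x, ‖f x‖ ∂μ) ^ 2 :=
        pow_le_pow_left₀ (norm_nonneg _) (norm_integral_le_integral_norm f) 2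
    _ = (∫ x, √((w x)⁻¹ * (w x * ‖f x‖ ^ 2)) ∂μ) ^ 2 := by rw [integral_congr_ae hnorm]
    _ ≤ _ := sq_integral_sqrt_mul_le (hw.mono fun x hx => (inv_pos.2 hx).le)
        (hw.mono fun x hx => by positivity) hw_inv hwf

theorem antitoneOn_mul_rpow_neg {a a' : ℝ → ℝ} {α : ℝ} {s : Set ℝ} (hs : Convex ℝ s)
    (hs0 : s ⊆ Ioi 0) (ha : ∀ x ∈ s, HasDerivAt a (a' x) x)
    (hle : ∀ x ∈ s, x * a' x ≤ α * a x) :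
    AntitoneOn (fun x => a x * x ^ (-α)) s := by
  have hderiv : ∀ x ∈ s, HasDerivAt (fun x => a x * x ^ (-α))
      (x ^ (-α) / x * (x * a' x - α * a x)) x := fun x hxs => by
    have hx : 0 < x := hs0 hxs
    refine ((ha x hxs).mul (hasDerivAt_rpow_const (p := -α) (Or.inl hx.ne'))).congr_deriv ?_
    rw [rpow_sub_one hx.ne']
    field_simp
    ring
  refine antitoneOn_of_deriv_nonpos hs
    (fun x hx => (hderiv x hx).continuousAt.continuousWithinAt)
    (fun x hx => (hderiv x (interior_subset hx)).differentiableAt.differentiableWithinAt)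
    fun x hx => ?_
  have hx : x ∈ s := interior_subset hx
  rw [(hderiv x hx).deriv]
  exact mul_nonpos_of_nonneg_of_nonpos (div_nonneg (rpow_nonneg (hs0 hx).le _) (hs0 hx).le)
    (sub_nonpos.2 (hle x hx))

theorem mul_rpow_le_of_mul_deriv_le {a a' : ℝ → ℝ} {α : ℝ}
    (ha : ∀ x ∈ Ioc (0:ℝ) 1, HasDerivAt a (a' x) x) (hle : ∀ x ∈ Ioc (0:ℝ) 1, x * a' x ≤ α * a x)
    {x : ℝ} (hx : x ∈ Ioc (0:ℝ) 1) : a 1 * x ^ α ≤ a x := by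
  have h := antitoneOn_mul_rpow_neg (convex_Ioc 0 1) Ioc_subset_Ioi_self ha hle hx
    (right_mem_Ioc.2 one_pos) hx.2
  dsimp only at h
  rwa [one_rpow, mul_one, rpow_neg hx.1.le, ← div_eq_mul_inv,
    le_div_iff₀ (rpow_pos_of_pos hx.1 α)] at h

theorem setIntegral_inv_le_of_mul_rpow_le {a : ℝ → ℝ} {α τ : ℝ} (hα : α < 1) (hτ : 0 < τ)
    (hτ1 : τ ≤ 1) (ha1 : 0 < a 1) (hinv : IntegrableOn (fun x => (a x)⁻¹) (Ioc τ 1))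
    (hlow : ∀ x ∈ Ioc τ 1, a 1 * x ^ α ≤ a x) :
    ∫ x in Ioc τ 1, (a x)⁻¹ ≤ (1 - τ ^ (1 - α)) / ((1 - α) * a 1) := by
  have hrpow : IntervalIntegrable (fun x => x ^ (-α)) volume τ 1 :=
    intervalIntegrable_rpow' (by linarith)
  calc ∫ x in Ioc τ 1, (a x)⁻¹ ≤ ∫ x in Ioc τ 1, x ^ (-α) / a 1 := by
        refine setIntegral_mono_on hinv (hrpow.1.div_const _) measurableSet_Ioc fun x hx => ?_
        have hx0 : 0 < x := hτ.trans hx.1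
        calc (a x)⁻¹ ≤ (a 1 * x ^ α)⁻¹ := inv_anti₀ (by positivity) (hlow x hx)
          _ = x ^ (-α) / a 1 := by rw [rpow_neg hx0.le, mul_inv, div_eq_mul_inv, mul_comm]
    _ = (1 - τ ^ (1 - α)) / ((1 - α) * a 1) := by
        rw [← integral_of_le hτ1, intervalIntegral.integral_div,
          integral_rpow (Or.inl (by linarith)), one_rpow, neg_add_eq_sub]
        field_simp

theorem sq_norm_integral_le_of_mul_rpow_le {E : Type*} [NormedAddCommGroup E] [NormedSpace ℝ E]
    {a : ℝ → ℝ} {f : ℝ → E} {α τ : ℝ} (hα : α < 1) (hτ : τ ∈ Ioc (0:ℝ) 1) (ha1 : 0 < a 1)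
    (hcont : ContinuousOn a (Ioc 0 1)) (hlow : ∀ x ∈ Ioc (0:ℝ) 1, a 1 * x ^ α ≤ a x)
    (hf : IntegrableOn (fun x => a x * ‖f x‖ ^ 2) (Ioc τ 1)) :
    ‖∫ x in τ..1, f x‖ ^ 2
      ≤ (1 - τ ^ (1 - α)) / ((1 - α) * a 1) * ∫ x in Ioc τ 1, a x * ‖f x‖ ^ 2 := by
  have hpos : ∀ x ∈ Ioc (0:ℝ) 1, 0 < a x := fun x hx =>
    (mul_pos ha1 (rpow_pos_of_pos hx.1 α)).trans_le (hlow x hx)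
  have hIcc : Icc τ 1 ⊆ Ioc 0 1 := fun x hx => ⟨hτ.1.trans_le hx.1, hx.2⟩
  have hinv : IntegrableOn (fun x => (a x)⁻¹) (Ioc τ 1) :=
    ((hcont.mono hIcc).inv₀ fun x hx => (hpos x (hIcc hx)).ne').integrableOn_Icc.mono_set
      Ioc_subset_Icc_self
  have hweight := setIntegral_inv_le_of_mul_rpow_le hα hτ.1 hτ.2 ha1 hinv
    fun x hx => hlow x (hIcc (Ioc_subset_Icc_self hx))
  rw [integral_of_le hτ.2]
  calc _ ≤ (∫ x in Ioc τ 1, (a x)⁻¹) * ∫ x in Ioc τ 1, a x * ‖f x‖ ^ 2 :=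
        sq_norm_integral_le_integral_inv_mul (ae_restrict_of_forall_mem measurableSet_Ioc
          fun x hx => hpos x (hIcc (Ioc_subset_Icc_self hx))) hinv hf
    _ ≤ _ := mul_le_mul_of_nonneg_right hweight
        (setIntegral_nonneg measurableSet_Ioc fun x hx =>
          mul_nonneg (hpos x (hIcc (Ioc_subset_Icc_self hx))).le (sq_nonneg _))

theorem integral_one_sub_rpow {p : ℝ} (hp : -1 < p) :
    ∫ τ in (0:ℝ)..1, (1 - τ ^ p) = p / (p + 1) := by
  have hp1 : p + 1 ≠ 0 := by linarith
  rw [integral_sub intervalIntegrable_const (intervalIntegrable_rpow' hp),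
    integral_rpow (Or.inl hp), intervalIntegral.integral_const, one_rpow, zero_rpow hp1]
  field_simp
  ring

theorem setIntegral_Ioc_le_of_le_mul_one_sub_rpow {g : ℝ → ℝ} {p C : ℝ} (hp : -1 < p)
    (hg0 : ∀ τ, 0 ≤ g τ) (hg : ∀ τ ∈ Ioo (0:ℝ) 1, g τ ≤ C * (1 - τ ^ p)) :
    ∫ τ in Ioc (0:ℝ) 1, g τ ≤ C * (p / (p + 1)) := by
  have hint : IntervalIntegrable (fun τ => C * (1 - τ ^ p)) volume 0 1 :=
    (intervalIntegrable_const.sub (intervalIntegrable_rpow' hp)).const_mul C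
  calc ∫ τ in Ioc (0:ℝ) 1, g τ = ∫ τ in Ioo (0:ℝ) 1, g τ := integral_Ioc_eq_integral_Ioo
    -- `g` need not be integrable: otherwise its integral is `0`, below the nonnegative bound.
    _ ≤ ∫ τ in Ioo (0:ℝ) 1, C * (1 - τ ^ p) :=
        integral_mono_of_nonneg (ae_of_all _ hg0) (hint.1.mono_set Ioo_subset_Ioc_self)
          (ae_restrict_of_forall_mem measurableSet_Ioo hg)
    _ = C * (p / (p + 1)) := by
        rw [← integral_Ioc_eq_integral_Ioo, ← integral_of_le zero_le_one,
          intervalIntegral.integral_const_mul, integral_one_sub_rpow hp]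

theorem stmt5_general (a a' : ℝ → ℝ) (α : ℝ)
    (hα1 : α < 1)
    (hpos : ∀ x ∈ Ioc (0:ℝ) 1, 0 < a x)
    (haderiv : ∀ x ∈ Ioc (0:ℝ) 1, HasDerivAt a (a' x) x)
    (hbound : ∀ x ∈ Ioc (0:ℝ) 1, x * |a' x| ≤ α * a x)
    (ψ ψ' : ℝ → ℂ)
    (hrep : ∀ τ ∈ Ioo (0:ℝ) 1, ψ τ = -∫ x in τ..1, ψ' x)
    (hL2 : IntegrableOn (fun x => a x * ‖ψ' x‖ ^ 2) (Ioc (0:ℝ) 1)) :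
    ∫ τ in Ioc (0:ℝ) 1, ‖ψ τ‖ ^ 2
      ≤ (1 / (a 1 * (2 - α))) * ∫ x in Ioc (0:ℝ) 1, a x * ‖ψ' x‖ ^ 2 := by
  set E := ∫ x in Ioc (0:ℝ) 1, a x * ‖ψ' x‖ ^ 2
  have ha1 : 0 < a 1 := hpos 1 (right_mem_Ioc.2 one_pos)
  have hlow : ∀ x ∈ Ioc (0:ℝ) 1, a 1 * x ^ α ≤ a x := fun x hx =>
    mul_rpow_le_of_mul_deriv_le haderiv
      (fun t ht => (mul_le_mul_of_nonneg_left (le_abs_self _) ht.1.le).trans (hbound t ht)) hx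
  have hpointwise : ∀ τ ∈ Ioo (0:ℝ) 1, ‖ψ τ‖ ^ 2 ≤ E / ((1 - α) * a 1) * (1 - τ ^ (1 - α)) := by
    intro τ hτ
    have hsub : Ioc τ 1 ⊆ Ioc 0 1 := Ioc_subset_Ioc_left hτ.1.le
    have hEτ : ∫ x in Ioc τ 1, a x * ‖ψ' x‖ ^ 2 ≤ E := setIntegral_mono_set hL2
      (ae_restrict_of_forall_mem measurableSet_Ioc fun x hx => mul_nonneg (hpos x hx).le
        (sq_nonneg _)) hsub.eventuallyLE
    have hweight_nonneg : 0 ≤ (1 - τ ^ (1 - α)) / ((1 - α) * a 1) :=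
      div_nonneg (sub_nonneg.2 (rpow_le_one hτ.1.le hτ.2.le (by linarith)))
        (mul_pos (sub_pos.2 hα1) ha1).le
    rw [hrep τ hτ, norm_neg]
    calc _ ≤ (1 - τ ^ (1 - α)) / ((1 - α) * a 1) * ∫ x in Ioc τ 1, a x * ‖ψ' x‖ ^ 2 :=
          sq_norm_integral_le_of_mul_rpow_le hα1 (Ioo_subset_Ioc_self hτ) ha1
            (fun x hx => (haderiv x hx).continuousAt.continuousWithinAt) hlow (hL2.mono_set hsub)
      _ ≤ (1 - τ ^ (1 - α)) / ((1 - α) * a 1) * E := mul_le_mul_of_nonneg_left hEτ hweight_nonneg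
      _ = E / ((1 - α) * a 1) * (1 - τ ^ (1 - α)) := by ring
  calc ∫ τ in Ioc (0:ℝ) 1, ‖ψ τ‖ ^ 2 ≤ E / ((1 - α) * a 1) * ((1 - α) / (1 - α + 1)) :=
        setIntegral_Ioc_le_of_le_mul_one_sub_rpow (by linarith) (fun _ => by positivity) hpointwise
    _ = 1 / (a 1 * (2 - α)) * E := by
        have : 1 - α ≠ 0 := by linarith
        rw [show 1 - α + 1 = 2 - α by ring]
        field_simp

/-- Hardy-type inequality: under (H2), for `ψ ∈ H¹(0,1)` with `ψ(1)=0`,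
`∫_0^1 |ψ|² ≤ (1/(a(1)(2−α)))·∫_0^1 a|ψ'|²`. -/
theorem stmt5 (a a' : ℝ → ℝ) (α : ℝ)
    (hα0 : 0 ≤ α) (hα1 : α < 1)
    (hpos : ∀ x ∈ Ioc (0:ℝ) 1, 0 < a x)
    (haderiv : ∀ x ∈ Ioc (0:ℝ) 1, HasDerivAt a (a' x) x)
    (hacont : ContinuousOn a' (Ioc (0:ℝ) 1))
    (hbound : ∀ x ∈ Ioc (0:ℝ) 1, x * |a' x| ≤ α * a x)
    (ψ ψ' : ℝ → ℂ)
    (hψ1 : ψ 1 = 0)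
    (hderiv : ∀ x ∈ Ioo (0:ℝ) 1, HasDerivAt ψ (ψ' x) x)
    (hψ'int : IntegrableOn ψ' (Ioc (0:ℝ) 1))
    (hrep : ∀ τ ∈ Ioo (0:ℝ) 1, ψ τ = -∫ x in τ..1, ψ' x)
    (hL2 : IntegrableOn (fun x => a x * ‖ψ' x‖ ^ 2) (Ioc (0:ℝ) 1)) :
    ∫ τ in Ioc (0:ℝ) 1, ‖ψ τ‖ ^ 2
      ≤ (1 / (a 1 * (2 - α))) * ∫ x in Ioc (0:ℝ) 1, a x * ‖ψ' x‖ ^ 2 :=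
  stmt5_general a a' α hα1 hpos haderiv hbound ψ ψ' hrep hL2
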